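/- Any two finite symplectic modules (A, φ) and (A', φ') are isometric if and only if A and A' are isomorphic as abelian groups. -/

import Mathlib

/-!
Induction on `|A|`. Let `n` be the exponent of `A` and `a` an element of order `n`. By
nondegeneracy the values `φ a x` form a subgroup of `ℚ/ℤ` of exponent `n`, which therefore
contains `1/n`: so `φ a b = 1/n` for some `b`. Then `a, b` span a copy of the standard hyperbolic
plane on `(ℤ/n)²`, and `A` is its orthogonal direct sum with the orthogonal complement `C`,
which is again symplectic. The number of `m`-torsion points is multiplicative in products and
determines the exponent, so an isomorphism `A ≃ A'` forces the same `n` for `A'` and the same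
torsion counts for the complements `C` and `C'`; these are isometric by induction, hence so are
`A` and `A'`.
-/
local notation "ℚ/ℤ" => AddCircle (1 : ℚ)

section ZModMultiples

variable {M : Type*} [AddCommGroup M] {n : ℕ}

def zmodMultiples {x : M} (hx : n • x = 0) : ZMod n →+ M :=
  ZMod.lift n ⟨zmultiplesHom M x, by simpa using hx⟩

theorem zmodMultiples_intCast {x : M} (hx : n • x = 0) (k : ℤ) :
    zmodMultiples hx k = k • x :=
  ZMod.lift_coe n _ k

end ZModMultiples

section UnitFraction

variable {n : ℕ}

noncomputable def unitFraction (n : ℕ) : ℚ/ℤ := ((n : ℚ)⁻¹ : ℚ)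

theorem nsmul_unitFraction (n : ℕ) : n • unitFraction n = 0 := by
  rcases eq_or_ne n 0 with rfl | hn
  · exact zero_nsmul _
  · rw [unitFraction, ← AddCircle.coe_nsmul, nsmul_eq_mul,
      mul_inv_cancel₀ (by exact_mod_cast hn)]
    exact AddCircle.coe_period (p := (1 : ℚ))

theorem addOrderOf_unitFraction (hn : 0 < n) : addOrderOf (unitFraction n) = n := by
  simpa [unitFraction] using
    AddCircle.addOrderOf_div_of_gcd_eq_one (p := (1 : ℚ)) (m := 1) hn (Nat.gcd_one_left n)

theorem unitFraction_ne_zero (hn : 1 < n) : unitFraction n ≠ 0 := fun h => by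
  have := addOrderOf_unitFraction (n := n) (by omega)
  rw [h, addOrderOf_zero] at this
  omega

noncomputable def zmodToQZ (n : ℕ) : ZMod n →+ ℚ/ℤ := zmodMultiples (nsmul_unitFraction n)

theorem zmodToQZ_injective [NeZero n] : Function.Injective (zmodToQZ n) := by
  refine (injective_iff_map_eq_zero _).2 fun i hi => ?_
  obtain ⟨k, rfl⟩ := ZMod.intCast_surjective i
  rw [zmodToQZ, zmodMultiples_intCast, ← addOrderOf_dvd_iff_zsmul_eq_zero,
    addOrderOf_unitFraction (NeZero.pos n)] at hi
  exact (ZMod.intCast_zmod_eq_zero_iff_dvd k n).2 hi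

theorem exists_zmodToQZ_eq [NeZero n] {z : ℚ/ℤ} (hz : n • z = 0) :
    ∃ i, zmodToQZ n i = z := by
  obtain ⟨q, rfl⟩ := QuotientAddGroup.mk_surjective z
  rw [← AddCircle.coe_nsmul, AddCircle.coe_eq_zero_iff] at hz
  obtain ⟨k, hk⟩ := hz
  refine ⟨k, ?_⟩
  have hq : q = k • (n : ℚ)⁻¹ := by
    rw [zsmul_eq_mul, mul_one, nsmul_eq_mul] at hk
    rw [zsmul_eq_mul, hk]
    field_simp [NeZero.ne n]
  rw [zmodToQZ, zmodMultiples_intCast, hq, unitFraction, AddCircle.coe_zsmul]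

theorem exists_zsmul_eq_unitFraction [NeZero n] {u : ℚ/ℤ} (hu : addOrderOf u = n) :
    ∃ k : ℤ, k • u = unitFraction n := by
  obtain ⟨c, rfl⟩ := exists_zmodToQZ_eq (hu ▸ addOrderOf_nsmul_eq_zero u)
  rw [addOrderOf_injective _ zmodToQZ_injective] at hu
  have htop : AddSubgroup.zmultiples c = ⊤ :=
    AddSubgroup.eq_top_of_card_eq _ (by rw [Nat.card_zmultiples, hu, Nat.card_zmod])
  obtain ⟨k, hk⟩ := AddSubgroup.mem_zmultiples_iff.1 (htop ▸ AddSubgroup.mem_top (1 : ZMod n))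
  refine ⟨k, ?_⟩
  rw [← map_zsmul, hk, zmodToQZ, ← Int.cast_one (R := ZMod n), zmodMultiples_intCast, one_zsmul]

end UnitFraction

section Forms

variable {A M : Type*} [AddCommGroup A] [AddCommGroup M]

def biadditiveHom (φ : A → A → M) (hL : ∀ a b c, φ (a + b) c = φ a c + φ b c)
    (hR : ∀ a b c, φ a (b + c) = φ a b + φ a c) : A →+ A →+ M :=
  AddMonoidHom.mk' (fun a => AddMonoidHom.mk' (φ a) (hR a)) fun a b => AddMonoidHom.ext (hL a b)

variable (B : A →+ A →+ M)

theorem apply_swap_of_apply_self (halt : ∀ x, B x x = 0) (x y : A) : B y x = -B x y := by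
  have h := halt (x + y)
  simp only [map_add, AddMonoidHom.add_apply, halt, zero_add, add_zero] at h
  exact eq_neg_of_add_eq_zero_left h

def restrictForm (C : AddSubgroup A) : C →+ C →+ M := (B.comp C.subtype).compl₂ C.subtype

@[simp]
theorem restrictForm_apply (C : AddSubgroup A) (c d : C) : restrictForm B C c d = B c d := rfl

def orthogonal (a b : A) : AddSubgroup A := (B a).ker ⊓ (B b).ker

variable {n : ℕ} {a b : A} (ha : n • a = 0) (hb : n • b = 0)

def hyperbolicSum : (ZMod n × ZMod n) × orthogonal B a b →+ A :=
  ((zmodMultiples ha).coprod (zmodMultiples hb)).coprod (orthogonal B a b).subtype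

theorem hyperbolicSum_apply (p : (ZMod n × ZMod n) × orthogonal B a b) :
    hyperbolicSum B ha hb p = zmodMultiples ha p.1.1 + zmodMultiples hb p.1.2 + p.2 := rfl

theorem hyperbolicSum_one_zero : hyperbolicSum B ha hb ((1, 0), 0) = a := by
  simpa [hyperbolicSum_apply] using zmodMultiples_intCast ha 1

theorem hyperbolicSum_zero_one : hyperbolicSum B ha hb ((0, 1), 0) = b := by
  simpa [hyperbolicSum_apply] using zmodMultiples_intCast hb 1

end Forms

structure IsSymplectic {A : Type*} [AddCommGroup A] (B : A →+ A →+ ℚ/ℤ) : Prop where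
  apply_self : ∀ x, B x x = 0
  nondegenerate : ∀ x, (∀ y, B x y = 0) → x = 0

theorem IsSymplectic.exists_apply_eq_unitFraction {A : Type*} [AddCommGroup A] [Finite A]
    {B : A →+ A →+ ℚ/ℤ} (hB : IsSymplectic B) :
    ∃ a b : A, B a b = unitFraction (AddMonoid.exponent A) := by
  have hexp := AddMonoid.ExponentExists.of_finite (G := A)
  have : NeZero (AddMonoid.exponent A) := ⟨hexp.exponent_pos.ne'⟩
  obtain ⟨a, ha⟩ := AddMonoid.exists_addOrderOf_eq_exponent hexp
  have : Finite (B a).range := Finite.of_surjective _ (B a).rangeRestrict_surjective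
  obtain ⟨u, hu⟩ := AddMonoid.exists_addOrderOf_eq_exponent
    (AddMonoid.ExponentExists.of_finite (G := (B a).range))
  obtain ⟨b₀, hb₀⟩ := u.prop
  rw [← AddSubgroup.addOrderOf_coe, ← hb₀] at hu
  have hord : addOrderOf (B a b₀) = AddMonoid.exponent A := by
    refine Nat.dvd_antisymm (addOrderOf_dvd_of_nsmul_eq_zero ?_) ?_
    · rw [← AddMonoidHom.nsmul_apply, ← map_nsmul, AddMonoid.exponent_nsmul_eq_zero,
        map_zero, AddMonoidHom.zero_apply]
    · rw [hu, ← ha]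
      refine addOrderOf_dvd_of_nsmul_eq_zero (hB.nondegenerate _ fun y => ?_)
      rw [map_nsmul, AddMonoidHom.nsmul_apply]
      exact congrArg Subtype.val
        (AddMonoid.exponent_nsmul_eq_zero (⟨B a y, y, rfl⟩ : (B a).range))
  obtain ⟨k, hk⟩ := exists_zsmul_eq_unitFraction hord
  exact ⟨a, k • b₀, by rw [map_zsmul, hk]⟩

noncomputable def hyperbolicForm (n : ℕ) (p q : ZMod n × ZMod n) : ℚ/ℤ :=
  zmodToQZ n (p.1 * q.2 - p.2 * q.1)

section Hyperbolic

variable {A : Type*} [AddCommGroup A] {B : A →+ A →+ ℚ/ℤ} {n : ℕ} {a b : A}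
  (ha : n • a = 0) (hb : n • b = 0)

section Alternating

variable (halt : ∀ x, B x x = 0) (hab : B a b = unitFraction n)
include halt hab

theorem apply_hyperbolicSum (p q : (ZMod n × ZMod n) × orthogonal B a b) :
    B (hyperbolicSum B ha hb p) (hyperbolicSum B ha hb q) =
      hyperbolicForm n p.1 q.1 + B p.2 q.2 := by
  obtain ⟨⟨i, j⟩, c, hc⟩ := p
  obtain ⟨⟨k, l⟩, d, hd⟩ := q
  obtain ⟨i, rfl⟩ := ZMod.intCast_surjective i
  obtain ⟨j, rfl⟩ := ZMod.intCast_surjective j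
  obtain ⟨k, rfl⟩ := ZMod.intCast_surjective k
  obtain ⟨l, rfl⟩ := ZMod.intCast_surjective l
  have hca : B c a = 0 := by rw [apply_swap_of_apply_self B halt, hc.1, neg_zero]
  have hcb : B c b = 0 := by rw [apply_swap_of_apply_self B halt, hc.2, neg_zero]
  have had : B a d = 0 := hd.1
  have hbd : B b d = 0 := hd.2
  have hba : B b a = -unitFraction n := by rw [apply_swap_of_apply_self B halt, hab]
  simp only [hyperbolicSum_apply, hyperbolicForm, zmodMultiples_intCast, zmodToQZ, ← Int.cast_mul,
    ← Int.cast_sub, map_add, map_zsmul, AddMonoidHom.add_apply, AddMonoidHom.zsmul_apply, halt,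
    hab, hba, hca, hcb, had, hbd]
  module

theorem apply_hyperbolicSum_left (p : (ZMod n × ZMod n) × orthogonal B a b) :
    B a (hyperbolicSum B ha hb p) = zmodToQZ n p.1.2 := by
  simpa [hyperbolicSum_one_zero, hyperbolicForm] using
    apply_hyperbolicSum ha hb halt hab ((1, 0), 0) p

theorem apply_hyperbolicSum_right (p : (ZMod n × ZMod n) × orthogonal B a b) :
    B (hyperbolicSum B ha hb p) b = zmodToQZ n p.1.1 := by
  simpa [hyperbolicSum_zero_one, hyperbolicForm] using
    apply_hyperbolicSum ha hb halt hab p ((0, 1), 0)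

theorem hyperbolicSum_bijective [NeZero n] : Function.Bijective (hyperbolicSum B ha hb) := by
  constructor
  · refine (injective_iff_map_eq_zero _).2 fun ⟨⟨i, j⟩, c⟩ hp => ?_
    have hi : i = 0 := zmodToQZ_injective <| by
      rw [map_zero, ← apply_hyperbolicSum_right ha hb halt hab ((i, j), c), hp, map_zero,
        AddMonoidHom.zero_apply]
    have hj : j = 0 := zmodToQZ_injective <| by
      rw [map_zero, ← apply_hyperbolicSum_left ha hb halt hab ((i, j), c), hp, map_zero]
    subst hi hj
    simpa [hyperbolicSum_apply] using hp
  · intro x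
    obtain ⟨i, hi⟩ := exists_zmodToQZ_eq (z := B x b) (by rw [← map_nsmul, hb, map_zero])
    obtain ⟨j, hj⟩ := exists_zmodToQZ_eq (z := B a x)
      (by rw [← AddMonoidHom.nsmul_apply, ← map_nsmul, ha, map_zero, AddMonoidHom.zero_apply])
    set y := hyperbolicSum B ha hb ((i, j), 0)
    have hc : x - y ∈ orthogonal B a b := by
      refine ⟨?_, ?_⟩
      · show B a (x - y) = 0
        rw [map_sub, apply_hyperbolicSum_left ha hb halt hab, hj, sub_self]
      · show B b (x - y) = 0
        rw [apply_swap_of_apply_self B halt, map_sub, AddMonoidHom.sub_apply,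
          apply_hyperbolicSum_right ha hb halt hab, hi, sub_self, neg_zero]
    refine ⟨((i, j), ⟨x - y, hc⟩), ?_⟩
    simp [y, hyperbolicSum_apply]

noncomputable def hyperbolicEquiv [NeZero n] : (ZMod n × ZMod n) × orthogonal B a b ≃+ A :=
  AddEquiv.ofBijective (hyperbolicSum B ha hb) (hyperbolicSum_bijective ha hb halt hab)

theorem apply_hyperbolicEquiv [NeZero n] (p q : (ZMod n × ZMod n) × orthogonal B a b) :
    B (hyperbolicEquiv ha hb halt hab p) (hyperbolicEquiv ha hb halt hab q) =
      hyperbolicForm n p.1 q.1 + B p.2 q.2 :=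
  apply_hyperbolicSum ha hb halt hab p q

end Alternating

include ha hb in
theorem IsSymplectic.restrictForm_orthogonal [NeZero n] (hB : IsSymplectic B)
    (hab : B a b = unitFraction n) : IsSymplectic (restrictForm B (orthogonal B a b)) where
  apply_self c := hB.apply_self c
  nondegenerate c hc := Subtype.ext <| hB.nondegenerate c fun x => by
    obtain ⟨q, rfl⟩ := (hyperbolicSum_bijective ha hb hB.apply_self hab).2 x
    have hc' : hyperbolicSum B ha hb ((0, 0), c) = c := by simp [hyperbolicSum_apply]
    rw [← hc', apply_hyperbolicSum ha hb hB.apply_self hab]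
    simpa [hyperbolicForm] using hc q.2

end Hyperbolic

section TorsionCount

variable {A A' : Type*} [AddCommGroup A] [AddCommGroup A']

variable (A) in
noncomputable def torsionCount (m : ℕ) : ℕ := Nat.card {x : A // m • x = 0}

theorem torsionCount_congr (e : A ≃+ A') (m : ℕ) : torsionCount A m = torsionCount A' m :=
  Nat.card_congr <| e.toEquiv.subtypeEquiv fun x => by simp [← map_nsmul]

theorem torsionCount_prod (m : ℕ) :
    torsionCount (A × A') m = torsionCount A m * torsionCount A' m := by
  rw [torsionCount, torsionCount, torsionCount, ← Nat.card_prod]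
  exact Nat.card_congr <| (Equiv.subtypeEquivRight fun x : A × A' => Prod.ext_iff).trans
    (Equiv.subtypeProdEquivProd (p := fun x : A => m • x = 0) (q := fun x : A' => m • x = 0))

theorem torsionCount_pos [Finite A] (m : ℕ) : 0 < torsionCount A m :=
  haveI : Nonempty {x : A // m • x = 0} := ⟨⟨0, smul_zero m⟩⟩
  Nat.card_pos

theorem torsionCount_eq_card_iff [Finite A] {m : ℕ} :
    torsionCount A m = Nat.card A ↔ AddMonoid.exponent A ∣ m := by
  rw [AddMonoid.exponent_dvd_iff_forall_nsmul_eq_zero]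
  refine ⟨fun h x => ?_, fun h => Nat.card_congr (Equiv.subtypeUnivEquiv h)⟩
  by_contra hx
  exact (Finite.card_subtype_lt (p := fun x : A => m • x = 0) hx).ne h

theorem card_eq_of_torsionCount_eq (h : ∀ m, torsionCount A m = torsionCount A' m) :
    Nat.card A = Nat.card A' := by
  simpa [torsionCount] using h 0

theorem exponent_eq_of_torsionCount_eq [Finite A] [Finite A']
    (h : ∀ m, torsionCount A m = torsionCount A' m) :
    AddMonoid.exponent A = AddMonoid.exponent A' := by
  have hdvd (m : ℕ) : AddMonoid.exponent A ∣ m ↔ AddMonoid.exponent A' ∣ m := by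
    rw [← torsionCount_eq_card_iff, ← torsionCount_eq_card_iff, h, card_eq_of_torsionCount_eq h]
  exact Nat.dvd_antisymm ((hdvd _).2 dvd_rfl) ((hdvd _).1 dvd_rfl)

theorem torsionCount_eq_of_equiv_prod {H C C' : Type*} [AddCommGroup H] [Finite H]
    [AddCommGroup C] [AddCommGroup C'] (E : H × C ≃+ A) (E' : H × C' ≃+ A')
    (h : ∀ m, torsionCount A m = torsionCount A' m) (m : ℕ) :
    torsionCount C m = torsionCount C' m := by
  have := h m
  rw [← torsionCount_congr E, ← torsionCount_congr E', torsionCount_prod,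
    torsionCount_prod] at this
  exact Nat.eq_of_mul_eq_mul_left (torsionCount_pos m) this

end TorsionCount

universe u v

theorem IsSymplectic.exists_isometry_of_torsionCount_eq {A : Type u} {A' : Type v}
    [AddCommGroup A] [Finite A] [AddCommGroup A'] [Finite A']
    {B : A →+ A →+ ℚ/ℤ} {B' : A' →+ A' →+ ℚ/ℤ} (hB : IsSymplectic B) (hB' : IsSymplectic B')
    (h : ∀ m, torsionCount A m = torsionCount A' m) :
    ∃ e : A ≃+ A', ∀ x y, B x y = B' (e x) (e y) := by
  induction hN : Nat.card A using Nat.strong_induction_on generalizing A A' with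
  | _ N ih =>
  rcases subsingleton_or_nontrivial A with hA | hA
  · have : Subsingleton A' := Finite.card_le_one_iff_subsingleton.1 <|
      card_eq_of_torsionCount_eq h ▸ Finite.card_le_one_iff_subsingleton.2 hA
    let := uniqueOfSubsingleton (0 : A)
    let := uniqueOfSubsingleton (0 : A')
    refine ⟨AddEquiv.ofUnique, fun x y => ?_⟩
    simp [Subsingleton.elim x 0]
  set n := AddMonoid.exponent A
  have hn : AddMonoid.exponent A' = n := (exponent_eq_of_torsionCount_eq h).symm
  have : NeZero n := ⟨(AddMonoid.ExponentExists.of_finite (G := A)).exponent_pos.ne'⟩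
  obtain ⟨a, b, hab⟩ := hB.exists_apply_eq_unitFraction
  obtain ⟨a', b', hab'⟩ := hB'.exists_apply_eq_unitFraction
  rw [hn] at hab'
  have ha := AddMonoid.exponent_nsmul_eq_zero a
  have hb := AddMonoid.exponent_nsmul_eq_zero b
  have ha' : n • a' = 0 := hn ▸ AddMonoid.exponent_nsmul_eq_zero a'
  have hb' : n • b' = 0 := hn ▸ AddMonoid.exponent_nsmul_eq_zero b'
  let E := hyperbolicEquiv ha hb hB.apply_self hab
  let E' := hyperbolicEquiv ha' hb' hB'.apply_self hab'
  have hn1 : 1 < n := by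
    have : n ≠ 1 := fun h1 => not_subsingleton A (AddMonoid.exp_eq_one_iff.1 h1)
    have := NeZero.ne n
    omega
  have hb_notMem : b ∉ orthogonal B a b := fun hb_mem =>
    unitFraction_ne_zero hn1 (hab ▸ hb_mem.1)
  obtain ⟨ε, hε⟩ := ih _ (hN ▸ Finite.card_subtype_lt hb_notMem)
    (hB.restrictForm_orthogonal ha hb hab) (hB'.restrictForm_orthogonal ha' hb' hab')
    (torsionCount_eq_of_equiv_prod E E' h) rfl
  refine ⟨E.symm.trans (((AddEquiv.refl _).prodCongr ε).trans E'), fun x y => ?_⟩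
  obtain ⟨p, rfl⟩ := E.surjective x
  obtain ⟨q, rfl⟩ := E.surjective y
  simp only [AddEquiv.trans_apply, AddEquiv.symm_apply_apply, E, E', apply_hyperbolicEquiv]
  exact congrArg _ (hε p.2 q.2)

/-- Two finite symplectic modules are isometric iff their underlying groups are
isomorphic. -/
theorem symplectic_isometric_iff_isomorphic
    {A : Type*} [AddCommGroup A] [Fintype A]
    {A' : Type*} [AddCommGroup A'] [Fintype A']
    (φ : A → A → AddCircle (1 : ℚ)) (φ' : A' → A' → AddCircle (1 : ℚ))
    (hL : ∀ a b c : A, φ (a + b) c = φ a c + φ b c)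
    (hR : ∀ a b c : A, φ a (b + c) = φ a b + φ a c)
    (halt : ∀ a : A, φ a a = 0)
    (hnd : ∀ a : A, (∀ b : A, φ a b = 0) → a = 0)
    (hL' : ∀ a b c : A', φ' (a + b) c = φ' a c + φ' b c)
    (hR' : ∀ a b c : A', φ' a (b + c) = φ' a b + φ' a c)
    (halt' : ∀ a : A', φ' a a = 0)
    (hnd' : ∀ a : A', (∀ b : A', φ' a b = 0) → a = 0) :
    (∃ e : A ≃+ A', ∀ a b : A, φ a b = φ' (e a) (e b)) ↔ Nonempty (A ≃+ A') :=
  ⟨fun ⟨e, _⟩ => ⟨e⟩, fun ⟨e⟩ =>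
    IsSymplectic.exists_isometry_of_torsionCount_eq (B := biadditiveHom φ hL hR)
      (B' := biadditiveHom φ' hL' hR') ⟨halt, hnd⟩ ⟨halt', hnd'⟩ (torsionCount_congr e)⟩
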